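/- Conformality of quaternionic inversion intertwining the induced complex structure with the constant one: let q = q₀ + q₁i + q₂j + q₃k ∈ ℍ with q₁ > 0, and set a = (q₀² + q₁² − q₂² − q₃²)/|q|², b = 2(q₀q₃ + q₁q₂)/|q|², c = 2(q₁q₃ − q₀q₂)/|q|², and I_q = a·i + b·j + c·k (so I_q ∈ 𝕊). Then the inversion map g : ℍ∖{0} → ℍ, g(x) = x⁻¹, is real-differentiable at q and its real Fréchet derivative satisfies (dg)_q(I_q·v) = i·((dg)_q(v)) for every v ∈ ℍ; that is, dg ∘ J^f = J_i ∘ dg at q, where J^f acts by left multiplication by I_q and J_i by left multiplication by i. -/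

import Mathlib

/-- The quaternion imaginary unit `i`. -/
noncomputable def qi : Quaternion ℝ := ⟨0, 1, 0, 0⟩

/-- The quaternion imaginary unit `j`. -/
noncomputable def qj : Quaternion ℝ := ⟨0, 0, 1, 0⟩

/-- The quaternion imaginary unit `k`. -/
noncomputable def qk : Quaternion ℝ := ⟨0, 0, 0, 1⟩

/-!
The unit `I_q` is the conjugate `q i q⁻¹`, i.e. `I_q q = q i`. Hence `I_q² = q i² q⁻¹ = -1`, and
since the derivative of inversion at `q` is `v ↦ -q⁻¹ v q⁻¹`, moving `I_q` past `q⁻¹` turns it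
into `i`.
-/

open ContinuousLinearMap
open scoped Quaternion

theorem SemiconjBy.sq_eq_neg_one {R : Type*} [Ring R] [NoZeroDivisors R] {a x y : R}
    (h : SemiconjBy a x y) (ha : a ≠ 0) (hx : x ^ 2 = -1) : y ^ 2 = -1 := by
  have hya : (y ^ 2 + 1) * a = 0 := by
    rw [add_mul, ← (h.pow_right 2).eq, hx]
    noncomm_ring
  exact eq_neg_of_add_eq_zero_left ((mul_eq_zero.1 hya).resolve_right ha)

theorem SemiconjBy.mulLeftRight_mul {𝕜 R : Type*} [NontriviallyNormedField 𝕜] [NormedRing R]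
    [NormedAlgebra 𝕜 R] {a x y : R} (h : SemiconjBy a x y) (b v : R) :
    mulLeftRight 𝕜 R a b (x * v) = y * mulLeftRight 𝕜 R a b v := by
  simp only [mulLeftRight_apply, ← mul_assoc, h.eq]

theorem qi_sq : qi ^ 2 = -1 := by
  ext <;>
    simp only [sq, Quaternion.re_mul, Quaternion.imI_mul, Quaternion.imJ_mul, Quaternion.imK_mul,
      Quaternion.re_neg, Quaternion.imI_neg, Quaternion.imJ_neg, Quaternion.imK_neg] <;>
    simp [qi]

/-- The unit `I_q` of the statement. -/
noncomputable def inducedUnit (q : Quaternion ℝ) : Quaternion ℝ :=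
  ((q.re ^ 2 + q.imI ^ 2 - q.imJ ^ 2 - q.imK ^ 2)
      / (q.re ^ 2 + q.imI ^ 2 + q.imJ ^ 2 + q.imK ^ 2)) • qi +
    (2 * (q.re * q.imK + q.imI * q.imJ)
      / (q.re ^ 2 + q.imI ^ 2 + q.imJ ^ 2 + q.imK ^ 2)) • qj +
    (2 * (q.imI * q.imK - q.re * q.imJ)
      / (q.re ^ 2 + q.imI ^ 2 + q.imJ ^ 2 + q.imK ^ 2)) • qk

theorem semiconjBy_qi_inducedUnit {q : Quaternion ℝ} (hq : q ≠ 0) :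
    SemiconjBy q qi (inducedUnit q) := by
  have hn : q.re ^ 2 + q.imI ^ 2 + q.imJ ^ 2 + q.imK ^ 2 ≠ 0 := by
    rwa [← Quaternion.normSq_def', Ne, Quaternion.normSq_eq_zero]
  unfold SemiconjBy inducedUnit
  ext <;>
    simp only [Quaternion.re_mul, Quaternion.imI_mul, Quaternion.imJ_mul, Quaternion.imK_mul,
      Quaternion.re_add, Quaternion.imI_add, Quaternion.imJ_add, Quaternion.imK_add,
      Quaternion.re_smul, Quaternion.imI_smul, Quaternion.imJ_smul, Quaternion.imK_smul,
      smul_eq_mul] <;>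
    simp only [qi, qj, qk] <;>
    field_simp <;> ring

/-- **Conformality of quaternionic inversion intertwining the induced complex
structure with the constant one**: for `q` with `q₁ > 0` and
`I_q = a·i + b·j + c·k` as below (`I_q ∈ 𝕊`), the inversion `g(x) = x⁻¹` is
real-differentiable at `q` and `(dg)_q(I_q·v) = i·((dg)_q v)` for every `v`,
i.e. `dg ∘ J^f = J_i ∘ dg` at `q`. -/
theorem inversion_intertwines_complex_structures
    (q : Quaternion ℝ) (hq : 0 < q.imI)
    (a b c : ℝ)
    (ha : a = (q.re ^ 2 + q.imI ^ 2 - q.imJ ^ 2 - q.imK ^ 2)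
        / (q.re ^ 2 + q.imI ^ 2 + q.imJ ^ 2 + q.imK ^ 2))
    (hb : b = 2 * (q.re * q.imK + q.imI * q.imJ)
        / (q.re ^ 2 + q.imI ^ 2 + q.imJ ^ 2 + q.imK ^ 2))
    (hc : c = 2 * (q.imI * q.imK - q.re * q.imJ)
        / (q.re ^ 2 + q.imI ^ 2 + q.imJ ^ 2 + q.imK ^ 2))
    (Iq : Quaternion ℝ) (hIq : Iq = a • qi + b • qj + c • qk) :
    Iq ^ 2 = -1 ∧
    ∃ L : Quaternion ℝ →L[ℝ] Quaternion ℝ,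
      HasFDerivAt (fun x : Quaternion ℝ => x⁻¹) L q ∧
      ∀ v : Quaternion ℝ, L (Iq * v) = qi * L v := by
  have hq0 : q ≠ 0 := fun h => hq.ne' (by simp [h])
  have hconj : SemiconjBy q qi Iq := by
    rw [hIq, ha, hb, hc]
    exact semiconjBy_qi_inducedUnit hq0
  refine ⟨hconj.sq_eq_neg_one hq0 qi_sq, -mulLeftRight ℝ _ q⁻¹ q⁻¹, hasFDerivAt_inv' hq0,
    fun v => ?_⟩
  simp only [neg_apply, hconj.inv_symm_left₀.mulLeftRight_mul, mul_neg]
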